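/- (Matching bounded by T-join under a metric.) Let c be a metric on V, let T ⊆ V have even cardinality, and let J be a T-join (an edge set of the complete graph on V in which exactly the vertices of T have odd degree). Then there exists a perfect matching M on T (a set of |T|/2 vertex-disjoint edges covering exactly the vertices of T) with c(M) ≤ c(J). -/

import Mathlib

open Finset

namespace TSPPath

noncomputable section
open scoped Classical

/-- Edge set of the complete graph on `Fin n`: all unordered pairs of distinct vertices. -/
def Edges (n : ℕ) : Finset (Sym2 (Fin n)) := Finset.univ.filter (fun e => ¬ e.IsDiag)

/-- `cutSet n S` is `δ(S)`: the edges with exactly one endpoint in `S`. -/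
def cutSet (n : ℕ) (S : Finset (Fin n)) : Finset (Sym2 (Fin n)) :=
  (Edges n).filter (fun e => ∃ u v : Fin n, e = s(u, v) ∧ u ∈ S ∧ v ∉ S)

/-- `inSet n S` is `E(S)`: the edges with both endpoints in `S`. -/
def inSet (n : ℕ) (S : Finset (Fin n)) : Finset (Sym2 (Fin n)) :=
  (Edges n).filter (fun e => ∀ v ∈ e, v ∈ S)

/-- Degree of a vertex in an edge set. -/
def deg (n : ℕ) (H : Finset (Sym2 (Fin n))) (v : Fin n) : ℕ :=
  (H.filter (fun e => v ∈ e)).card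

/-- Degree of a vertex in an edge multiset (counting multiplicity). -/
def mdeg (n : ℕ) (L : Multiset (Sym2 (Fin n))) (v : Fin n) : ℕ :=
  (L.filter (fun e => v ∈ e)).card

/-- Feasibility for the path-variant Held–Karp relaxation with endpoints `s, t`. -/
def HKPathFeasible (n : ℕ) (s t : Fin n) (x : Sym2 (Fin n) → ℝ) : Prop :=
  (∀ e, 0 ≤ x e) ∧
  (∑ e ∈ cutSet n {s}, x e = 1) ∧
  (∑ e ∈ cutSet n {t}, x e = 1) ∧
  (∀ v : Fin n, v ≠ s → v ≠ t → ∑ e ∈ cutSet n {v}, x e = 2) ∧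
  (∀ S : Finset (Fin n), S.Nonempty → S ≠ Finset.univ →
      ((s ∈ S ∧ t ∉ S) ∨ (s ∉ S ∧ t ∈ S)) → 1 ≤ ∑ e ∈ cutSet n S, x e) ∧
  (∀ S : Finset (Fin n), S.Nonempty → S ≠ Finset.univ →
      ¬((s ∈ S ∧ t ∉ S) ∨ (s ∉ S ∧ t ∈ S)) → 2 ≤ ∑ e ∈ cutSet n S, x e)

/-- `c` is a metric: nonnegative, symmetric, vanishing on the diagonal, triangle inequality. -/
def IsMetric (n : ℕ) (c : Fin n → Fin n → ℝ) : Prop :=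
  (∀ u v, 0 ≤ c u v) ∧ (∀ u v, c u v = c v u) ∧ (∀ u, c u u = 0) ∧
  (∀ u v w, c u w ≤ c u v + c v w)

/-- Cost of an unordered edge (defined by symmetrization, which agrees with `c u v`
whenever `c` is symmetric). -/
def ecost (n : ℕ) (c : Fin n → Fin n → ℝ) (e : Sym2 (Fin n)) : ℝ :=
  Sym2.lift ⟨fun u v => (c u v + c v u) / 2, by intro u v; ring⟩ e

/-- `c(x) = ∑_{e ∈ E} x_e c(e)`. -/
def xcost (n : ℕ) (c : Fin n → Fin n → ℝ) (x : Sym2 (Fin n) → ℝ) : ℝ :=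
  ∑ e ∈ Edges n, x e * ecost n c e

/-- `c(F) = ∑_{e ∈ F} c(e)` for an edge set `F`. -/
def fcost (n : ℕ) (c : Fin n → Fin n → ℝ) (F : Finset (Sym2 (Fin n))) : ℝ :=
  ∑ e ∈ F, ecost n c e

/-- `H` is (the edge set of) a spanning tree of the complete graph on `Fin n`. -/
def IsSpanningTree (n : ℕ) (H : Finset (Sym2 (Fin n))) : Prop :=
  H ⊆ Edges n ∧ (SimpleGraph.fromEdgeSet (H : Set (Sym2 (Fin n)))).Connected ∧
    H.card = n - 1

/-- The wrong-parity set of an edge set `H`: internal vertices of odd degree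
together with the endpoints of even degree. -/
def wrongParity (n : ℕ) (s t : Fin n) (H : Finset (Sym2 (Fin n))) : Finset (Fin n) :=
  Finset.univ.filter (fun v =>
    if v = s ∨ v = t then Even (deg n H v) else Odd (deg n H v))

/-- `M` is a perfect matching on the vertex set `T`: vertex-disjoint edges covering
exactly the vertices of `T`. -/
def IsPerfectMatchingOn (n : ℕ) (T : Finset (Fin n)) (M : Finset (Sym2 (Fin n))) : Prop :=
  M ⊆ Edges n ∧ (∀ v ∈ T, deg n M v = 1) ∧ (∀ v : Fin n, v ∉ T → deg n M v = 0)

/-- `J` is a `T`-join: exactly the vertices of `T` have odd degree in `J`. -/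
def IsTJoin (n : ℕ) (T : Finset (Fin n)) (J : Finset (Sym2 (Fin n))) : Prop :=
  J ⊆ Edges n ∧ ∀ v : Fin n, Odd (deg n J v) ↔ v ∈ T

/-- There is a Hamiltonian path from `s` to `t` in the complete graph on `Fin n`
of cost (w.r.t. the metric `c`) at most `B`. -/
def ExistsHamPath (n : ℕ) (s t : Fin n) (c : Fin n → Fin n → ℝ) (B : ℝ) : Prop :=
  ∃ p : (⊤ : SimpleGraph (Fin n)).Walk s t,
    p.IsHamiltonian ∧ (p.edges.map (ecost n c)).sum ≤ B

/-- Connectivity of the multigraph `(V, L)` (equivalently, of its support graph,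
which must span all of `Fin n`). -/
def MConnected (n : ℕ) (L : Multiset (Sym2 (Fin n))) : Prop :=
  (SimpleGraph.fromEdgeSet {e | e ∈ L}).Connected

/-- The multiset of edges traversed by the walk given by a vertex list `w`. -/
def walkEdges (n : ℕ) (w : List (Fin n)) : Multiset (Sym2 (Fin n)) :=
  ((w.zip w.tail).map (fun p => s(p.1, p.2)) : List (Sym2 (Fin n)))

/-- `w` is an Eulerian trail from `s` to `t` of the edge multiset `L`: a walk from `s`
to `t` whose multiset of traversed edges is exactly `L` (with multiplicity). -/
def IsEulerianTrail (n : ℕ) (L : Multiset (Sym2 (Fin n))) (s t : Fin n)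
    (w : List (Fin n)) : Prop :=
  w.head? = some s ∧ w.getLast? = some t ∧ walkEdges n w = L

/-!
Induction on `|J|`. Pick `t ∈ T` and an edge `tu ∈ J`; then `J - tu` is a `(T ∆ {t, u})`-join,
so by induction some perfect matching `M'` on `T ∆ {t, u}` costs at most `c(J) - c(tu)`.
If `u ∈ T`, add `tu` to `M'`. Otherwise `u` is matched in `M'` to some `w`, and replacing `uw`
by `tw` costs at most `c(tu)` by the triangle inequality.
-/

open scoped symmDiff

variable {n : ℕ}

lemma mk_mem_Edges_iff {a b : Fin n} : s(a, b) ∈ Edges n ↔ a ≠ b := by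
  simp [Edges]

lemma deg_insert_of_notMem {H : Finset (Sym2 (Fin n))} {e : Sym2 (Fin n)} (he : e ∉ H)
    (v : Fin n) : deg n (insert e H) v = deg n H v + if v ∈ e then 1 else 0 := by
  unfold deg
  rw [Finset.filter_insert]
  split_ifs
  · exact Finset.card_insert_of_notMem fun h => he (Finset.mem_filter.1 h).1
  · rfl

lemma deg_erase_add {H : Finset (Sym2 (Fin n))} {e : Sym2 (Fin n)} (he : e ∈ H) (v : Fin n) :
    deg n (H.erase e) v + (if v ∈ e then 1 else 0) = deg n H v := by
  conv_rhs => rw [← Finset.insert_erase he]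
  rw [deg_insert_of_notMem (Finset.notMem_erase e H)]

lemma deg_eq_zero_iff {H : Finset (Sym2 (Fin n))} {v : Fin n} :
    deg n H v = 0 ↔ ∀ e ∈ H, v ∉ e := by
  simp [deg, Finset.filter_eq_empty_iff]

lemma exists_mk_mem_of_deg_pos {H : Finset (Sym2 (Fin n))} {v : Fin n} (h : 0 < deg n H v) :
    ∃ u, s(v, u) ∈ H := by
  obtain ⟨e, he, hve⟩ : ∃ e ∈ H, v ∈ e := by
    by_contra! hH
    exact h.ne' (deg_eq_zero_iff.2 hH)
  exact ⟨Sym2.Mem.other hve, (Sym2.other_spec hve).symm ▸ he⟩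

lemma ecost_mk {c : Fin n → Fin n → ℝ} (hc : ∀ u v, c u v = c v u) (a b : Fin n) :
    ecost n c s(a, b) = c a b := by
  simp only [ecost, Sym2.lift_mk, hc b a]
  ring

lemma ecost_nonneg {c : Fin n → Fin n → ℝ} (hc : ∀ u v, 0 ≤ c u v) (e : Sym2 (Fin n)) :
    0 ≤ ecost n c e := by
  induction e using Sym2.ind with
  | _ a b => simp only [ecost, Sym2.lift_mk]; linarith [hc a b, hc b a]

lemma fcost_nonneg {c : Fin n → Fin n → ℝ} (hc : ∀ u v, 0 ≤ c u v)
    (F : Finset (Sym2 (Fin n))) :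
    0 ≤ fcost n c F :=
  Finset.sum_nonneg fun e _ => ecost_nonneg hc e

lemma fcost_insert_le {c : Fin n → Fin n → ℝ} (hc : ∀ u v, 0 ≤ c u v)
    (e : Sym2 (Fin n)) (F : Finset (Sym2 (Fin n))) :
    fcost n c (insert e F) ≤ ecost n c e + fcost n c F := by
  by_cases he : e ∈ F
  · rw [Finset.insert_eq_of_mem he]
    linarith [ecost_nonneg hc e]
  · exact (Finset.sum_insert he).le

lemma fcost_erase_add {c : Fin n → Fin n → ℝ} {F : Finset (Sym2 (Fin n))} {e : Sym2 (Fin n)}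
    (he : e ∈ F) : fcost n c (F.erase e) + ecost n c e = fcost n c F :=
  Finset.sum_erase_add F _ he

lemma IsTJoin.exists_mk_mem {T : Finset (Fin n)} {J : Finset (Sym2 (Fin n))}
    (hJ : IsTJoin n T J) {t : Fin n} (ht : t ∈ T) : ∃ u, s(t, u) ∈ J :=
  exists_mk_mem_of_deg_pos ((hJ.2 t).2 ht).pos

lemma IsTJoin.erase {T : Finset (Fin n)} {J : Finset (Sym2 (Fin n))} (hJ : IsTJoin n T J)
    {a b : Fin n} (he : s(a, b) ∈ J) : IsTJoin n (T ∆ {a, b}) (J.erase s(a, b)) := by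
  refine ⟨(Finset.erase_subset _ _).trans hJ.1, fun v => ?_⟩
  have hv := hJ.2 v
  rw [← deg_erase_add he v] at hv
  rw [Finset.mem_symmDiff]
  by_cases hve : v ∈ s(a, b)
  · have hvab : v ∈ ({a, b} : Finset (Fin n)) := by simpa using hve
    simp only [hve, if_true, Nat.odd_add_one] at hv
    tauto
  · have hvab : v ∉ ({a, b} : Finset (Fin n)) := by simpa using hve
    simp only [hve, if_false, add_zero] at hv
    tauto

lemma isPerfectMatchingOn_iff {T : Finset (Fin n)} {M : Finset (Sym2 (Fin n))} :
    IsPerfectMatchingOn n T M ↔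
      M ⊆ Edges n ∧ ∀ v, deg n M v = if v ∈ T then 1 else 0 := by
  refine and_congr_right fun _ =>
    ⟨fun ⟨h1, h0⟩ v => ?_, fun h => ⟨fun v hv => ?_, fun v hv => ?_⟩⟩
  · split_ifs with hv
    exacts [h1 v hv, h0 v hv]
  · simpa [hv] using h v
  · simpa [hv] using h v

lemma isPerfectMatchingOn_empty : IsPerfectMatchingOn n ∅ ∅ :=
  isPerfectMatchingOn_iff.2 ⟨Finset.empty_subset _, fun v => by simp [deg]⟩

lemma IsPerfectMatchingOn.exists_mk_mem {T : Finset (Fin n)} {M : Finset (Sym2 (Fin n))}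
    (hM : IsPerfectMatchingOn n T M) {v : Fin n} (hv : v ∈ T) : ∃ w, s(v, w) ∈ M :=
  exists_mk_mem_of_deg_pos (hM.2.1 v hv).ge

lemma IsPerfectMatchingOn.insert_of_symmDiff {T : Finset (Fin n)} {M : Finset (Sym2 (Fin n))}
    {a b : Fin n} (hM : IsPerfectMatchingOn n (T ∆ {a, b}) M) (hab : a ≠ b) (ha : a ∈ T)
    (hb : b ∈ T) : IsPerfectMatchingOn n T (insert s(a, b) M) := by
  rw [isPerfectMatchingOn_iff] at hM ⊢
  have he : s(a, b) ∉ M := fun h =>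
    deg_eq_zero_iff.1 (by simp [hM.2 a, Finset.mem_symmDiff, ha]) _ h (Sym2.mem_mk_left a b)
  refine ⟨Finset.insert_subset (mk_mem_Edges_iff.2 hab) hM.1, fun v => ?_⟩
  rw [deg_insert_of_notMem he, hM.2 v]
  by_cases hva : v = a <;> by_cases hvb : v = b <;> simp_all [Finset.mem_symmDiff]

lemma IsPerfectMatchingOn.exchange {T : Finset (Fin n)} {M : Finset (Sym2 (Fin n))}
    {t u w : Fin n} (hM : IsPerfectMatchingOn n (T ∆ {t, u}) M) (ht : t ∈ T) (hu : u ∉ T)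
    (huw : s(u, w) ∈ M) : IsPerfectMatchingOn n T (insert s(t, w) (M.erase s(u, w))) := by
  rw [isPerfectMatchingOn_iff] at hM ⊢
  have huw' : u ≠ w := mk_mem_Edges_iff.1 (hM.1 huw)
  have hw : w ∈ T ∆ {t, u} := by
    by_contra hw
    exact deg_eq_zero_iff.1 (by simp [hM.2 w, hw]) _ huw (Sym2.mem_mk_right u w)
  have htw : t ≠ w := by rintro rfl; simp [Finset.mem_symmDiff, ht] at hw
  have hg : s(t, w) ∉ M.erase s(u, w) := fun h =>
    deg_eq_zero_iff.1 (by simp [hM.2 t, Finset.mem_symmDiff, ht]) _ (Finset.mem_of_mem_erase h)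
      (Sym2.mem_mk_left t w)
  refine ⟨Finset.insert_subset (mk_mem_Edges_iff.2 htw)
    ((Finset.erase_subset _ _).trans hM.1), fun v => ?_⟩
  have hv := deg_erase_add huw v
  rw [hM.2 v] at hv
  rw [deg_insert_of_notMem hg]
  by_cases hvt : v = t <;> by_cases hvu : v = u <;> by_cases hvw : v = w <;>
    simp_all [Finset.mem_symmDiff]

theorem matching_le_Tjoin_general (n : ℕ)
    (c : Fin n → Fin n → ℝ) (hc : IsMetric n c)
    (T : Finset (Fin n))
    (J : Finset (Sym2 (Fin n))) (hJ : IsTJoin n T J) :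
    ∃ M : Finset (Sym2 (Fin n)), IsPerfectMatchingOn n T M ∧
      fcost n c M ≤ fcost n c J := by
  obtain ⟨hc_nonneg, hc_symm, -, hc_triangle⟩ := hc
  induction J using Finset.strongInduction generalizing T with
  | H J ih =>
  obtain rfl | ⟨t, ht⟩ := T.eq_empty_or_nonempty
  · exact ⟨∅, isPerfectMatchingOn_empty, by simpa [fcost] using fcost_nonneg hc_nonneg J⟩
  obtain ⟨u, htu⟩ := hJ.exists_mk_mem ht
  have htu' : t ≠ u := mk_mem_Edges_iff.1 (hJ.1 htu)
  obtain ⟨M', hM', hM'_le⟩ := ih _ (Finset.erase_ssubset htu) _ (hJ.erase htu)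
  have hJ_cost := fcost_erase_add (c := c) htu
  rw [ecost_mk hc_symm] at hJ_cost
  by_cases hu : u ∈ T
  · refine ⟨_, hM'.insert_of_symmDiff htu' ht hu, ?_⟩
    have h_ins := fcost_insert_le hc_nonneg s(t, u) M'
    rw [ecost_mk hc_symm] at h_ins
    linarith
  · obtain ⟨w, huw⟩ := hM'.exists_mk_mem (v := u) (by simp [Finset.mem_symmDiff, hu])
    refine ⟨_, hM'.exchange ht hu huw, ?_⟩
    have h_ins := fcost_insert_le hc_nonneg s(t, w) (M'.erase s(u, w))
    have h_era := fcost_erase_add (c := c) huw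
    rw [ecost_mk hc_symm] at h_ins h_era
    linarith [hc_triangle t u w]

/-- (Matching bounded by `T`-join under a metric.) If `T` has even
cardinality and `J` is a `T`-join, then there is a perfect matching `M` on `T` with
`c(M) ≤ c(J)`. -/
theorem matching_le_Tjoin (n : ℕ)
    (c : Fin n → Fin n → ℝ) (hc : IsMetric n c)
    (T : Finset (Fin n)) (hT : Even T.card)
    (J : Finset (Sym2 (Fin n))) (hJ : IsTJoin n T J) :
    ∃ M : Finset (Sym2 (Fin n)), IsPerfectMatchingOn n T M ∧
      fcost n c M ≤ fcost n c J :=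
  matching_le_Tjoin_general n c hc T J hJ

end
end TSPPath
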